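/- arXiv:1305.5092 — 2 statements merged into one kernel-verified Lean document; each statement's English description precedes it below -/
import Mathlib

section
/- Let A = A_1 ⊔ A_2 ⊔ A_3 be a (3,4)-net in P^2(C) all of whose multiple points have multiplicity 2 or 3. If two of the three classes each contain three concurrent lines (a triple point inside the class), then the third class also contains three concurrent lines. -/
/-!
Lines of class `i` against lines of class `j` form a Latin square of order 4 with entries in
class `k`: the entry at `(L, K)` is the line of class `k` through `L ∩ K`. Every Latin square of
order 4 is isotopic to the table of an abelian group, so for three rows `L₁, L₂, L₃` the three
columns other than a given one can be labelled `J₁, J₂, J₃` with entry `(Lₐ, J_b)` equal to entry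
`(L_b, Jₐ)`. Taking for `Lₐ` the concurrent lines of class `i` and removing the column not among
the concurrent lines of class `j`, the three lines `N₁ = (L₂, J₃) = (L₃, J₂)`,
`N₂ = (L₁, J₃) = (L₃, J₁)`, `N₃ = (L₁, J₂) = (L₂, J₁)` of class `k` are concurrent by the dual of
Pappus's theorem.
-/
open scoped Classical

noncomputable section

/-- The complex projective plane `P²(ℂ)`. -/
abbrev ProjPlane : Type := Projectivization ℂ (Fin 3 → ℂ)

/-- A subset of `P²(ℂ)` is a projective line if it is the zero locus of a nonzero
linear form. -/
def IsProjLine (S : Set ProjPlane) : Prop :=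
  ∃ f : (Fin 3 → ℂ) →ₗ[ℂ] ℂ, f ≠ 0 ∧ S = {p : ProjPlane | f p.rep = 0}

/-- The lines of the arrangement `A` passing through the point `p`. -/
def linesThrough (A : Finset (Set ProjPlane)) (p : ProjPlane) : Finset (Set ProjPlane) :=
  A.filter fun L => p ∈ L

/-- The multiplicity of a point `p` with respect to the arrangement `A`. -/
def mult (A : Finset (Set ProjPlane)) (p : ProjPlane) : ℕ :=
  (linesThrough A p).card

/-- `p` is a multiple point of the arrangement `A` (at least two lines pass through it). -/
def IsMultPoint (A : Finset (Set ProjPlane)) (p : ProjPlane) : Prop :=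
  2 ≤ mult A p

/-- A `q`-cocycle of the line arrangement `A`: for every multiple point `p`,
if `q` divides the multiplicity then the values of `η` on the lines through `p` sum to `0`,
and otherwise `η` is constant on the lines through `p`. -/
def IsCocycle (q : ℕ) (A : Finset (Set ProjPlane)) (η : Set ProjPlane → ZMod q) : Prop :=
  ∀ p : ProjPlane, IsMultPoint A p →
    ((q ∣ mult A p → ∑ L ∈ linesThrough A p, η L = 0) ∧
     (¬ q ∣ mult A p → ∀ L ∈ linesThrough A p, ∀ K ∈ linesThrough A p, η L = η K))

/-- A function on lines is non-constant on the arrangement `A`. -/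
def NonConstant {α : Type*} (A : Finset (Set ProjPlane)) (η : Set ProjPlane → α) : Prop :=
  ∃ L ∈ A, ∃ K ∈ A, η L ≠ η K

/-- A `(k,q)`-net structure on the line arrangement `A`, with classes `C 0, …, C (k-1)`:
the classes partition `A` into `k` classes of `q` lines each, and whenever two lines from
different classes meet, their intersection point lies on exactly one line of each class. -/
def IsNet (k q : ℕ) (A : Finset (Set ProjPlane)) (C : Fin k → Finset (Set ProjPlane)) : Prop :=
  (∀ L ∈ A, IsProjLine L) ∧
  A.card = k * q ∧
  (∀ i, (C i).card = q) ∧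
  (∀ i j, i ≠ j → Disjoint (C i) (C j)) ∧
  (∀ i, C i ⊆ A) ∧
  (∀ L ∈ A, ∃ i, L ∈ C i) ∧
  (∀ i j, i ≠ j → ∀ L ∈ C i, ∀ K ∈ C j, ∀ p : ProjPlane, p ∈ L → p ∈ K →
    ∀ m : Fin k, ∃! N, N ∈ C m ∧ p ∈ N)

/-- Lattice isomorphism of two line arrangements: a bijection between the lines such that
a subfamily of lines has a common point iff the image subfamily has a common point. -/
def LatticeIso (A B : Finset (Set ProjPlane)) : Prop :=
  ∃ φ : Set ProjPlane → Set ProjPlane, Set.BijOn φ ↑A ↑B ∧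
    ∀ S : Finset (Set ProjPlane), S ⊆ A →
      ((∃ p : ProjPlane, ∀ L ∈ S, p ∈ L) ↔ ∃ p : ProjPlane, ∀ L ∈ S, p ∈ φ L)

/-- The projective line with homogeneous equation `a·x + b·y + c·z = 0`. -/
def lineOf (a b c : ℂ) : Set ProjPlane :=
  {p : ProjPlane | a * p.rep 0 + b * p.rep 1 + c * p.rep 2 = 0}

/-- `S` contains three distinct concurrent lines. -/
def HasConcurrentTriple (S : Finset (Set ProjPlane)) : Prop :=
  ∃ L ∈ S, ∃ M ∈ S, ∃ N ∈ S, L ≠ M ∧ L ≠ N ∧ M ≠ N ∧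
    ∃ p : ProjPlane, p ∈ L ∧ p ∈ M ∧ p ∈ N

open Matrix Function
open scoped LinearAlgebra.Projectivization

/-- Pappus's theorem in coordinates, once the third line of each pencil is written as a
combination of the other two. -/
theorem pappus_dot_cross {R : Type*} [CommRing R] (s t u v : R) (l₁ l₂ k₁ k₂ : Fin 3 → R) :
    ((l₂ ⨯₃ (u • k₁ + v • k₂)) ⨯₃ ((s • l₁ + t • l₂) ⨯₃ k₂)) ⬝ᵥ
      ((l₁ ⨯₃ (u • k₁ + v • k₂)) ⨯₃ ((s • l₁ + t • l₂) ⨯₃ k₁)) ⨯₃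
        ((l₁ ⨯₃ k₂) ⨯₃ (l₂ ⨯₃ k₁)) = 0 := by
  simp only [cross_cross_eq_smul_sub_smul, map_add, map_smul, map_sub, LinearMap.add_apply,
    LinearMap.smul_apply, LinearMap.sub_apply, dotProduct_add, add_dotProduct, dotProduct_smul,
    smul_dotProduct, dotProduct_sub, sub_dotProduct, smul_eq_mul]
  simp only [cross_apply, vec3_dotProduct, Matrix.cons_val]
  ring

section Field

variable {F : Type*} [Field F]

theorem exists_eq_smul_add_smul_of_dot_cross_eq_zero {u v w : Fin 3 → F} (huv : u ⨯₃ v ≠ 0)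
    (hw : w ⬝ᵥ u ⨯₃ v = 0) : ∃ s t : F, w = s • u + t • v := by
  have hdet : det (of ![u, v, w]) = 0 := by
    change det ![u, v, w] = 0
    rwa [← triple_product_eq_det, triple_product_permutation, triple_product_permutation]
  obtain ⟨x, hx0, hx⟩ := (exists_vecMul_eq_zero_iff (M := of ![u, v, w])).mpr hdet
  have hsum : x 0 • u + x 1 • v + x 2 • w = 0 := by simpa [vecHead, vecTail, add_assoc] using hx
  have hind := crossProduct_ne_zero_iff_linearIndependent.mp huv
  have hx2 : x 2 ≠ 0 := by
    intro h2
    rw [h2, zero_smul, add_zero] at hsum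
    obtain ⟨h0, h1⟩ := LinearIndependent.pair_iff.mp hind (x 0) (x 1) hsum
    apply hx0
    ext i
    fin_cases i
    · exact h0
    · exact h1
    · exact h2
  refine ⟨-(x 0 / x 2), -(x 1 / x 2), ?_⟩
  rw [← smul_right_inj hx2, smul_add, smul_smul, smul_smul, eq_neg_of_add_eq_zero_right hsum,
    mul_neg, mul_neg, mul_div_cancel₀ _ hx2, mul_div_cancel₀ _ hx2, neg_smul, neg_smul, neg_add]

namespace Projectivization

theorem exists_orthogonal_of_dot_cross_eq_zero {u v w : Fin 3 → F} (hu : u ≠ 0) (hv : v ≠ 0)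
    (hw : w ≠ 0) (h : u ⬝ᵥ v ⨯₃ w = 0) :
    ∃ p, (mk F u hu).orthogonal p ∧ (mk F v hv).orthogonal p ∧ (mk F w hw).orthogonal p := by
  rw [triple_product_eq_det] at h
  obtain ⟨x, hx0, hx⟩ := (exists_mulVec_eq_zero_iff (M := of ![u, v, w])).mpr h
  simp only [cons_mulVec, cons_eq_zero_iff] at hx
  exact ⟨mk F x hx0, hx.1, hx.2.1, hx.2.2.1⟩

variable [DecidableEq F]

theorem eq_cross_of_orthogonal {u v w : ℙ F (Fin 3 → F)} (huv : u ≠ v) (hu : w.orthogonal u)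
    (hv : w.orthogonal v) : w = cross u v := by
  induction u with | h u hu0 =>
  induction v with | h v hv0 =>
  induction w with | h w hw0 =>
  rw [orthogonal_mk] at hu hv
  rw [cross_mk_of_ne hu0 hv0 huv, mk_eq_mk_iff_crossProduct_eq_zero,
    cross_cross_eq_smul_sub_smul', hv, dotProduct_comm, hu, zero_smul, zero_smul, sub_zero]

theorem cross_ne_cross_of_orthogonal {a a' b b' P : ℙ F (Fin 3 → F)} (ha : a.orthogonal P)
    (ha' : a'.orthogonal P) (haa' : a ≠ a') (hb : ¬ b.orthogonal P) (hab : a ≠ b)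
    (ha'b' : a' ≠ b') : cross a b ≠ cross a' b' := by
  intro h
  have hP : cross a b = P := by
    rw [eq_cross_of_orthogonal haa' (orthogonal_comm.mp ha) (orthogonal_comm.mp ha'),
      eq_cross_of_orthogonal haa' (cross_orthogonal_left hab) (h ▸ cross_orthogonal_left ha'b')]
  exact hb (hP ▸ orthogonal_cross_right hab)

/-- Pappus's theorem, reading `orthogonal` as incidence: the `aᵢ` lie on the line `P`, the `bⱼ`
on the line `Q`, `cross a b` is the line through `a` and `b`, and `nₖ` is the meet of two such
lines. -/
theorem pappus {a₁ a₂ a₃ b₁ b₂ b₃ n₁ n₂ n₃ P Q : ℙ F (Fin 3 → F)}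
    (ha₁₂ : a₁ ≠ a₂) (ha₁₃ : a₁ ≠ a₃) (ha₂₃ : a₂ ≠ a₃) (hb₁₂ : b₁ ≠ b₂)
    (ha₁ : a₁.orthogonal P) (ha₂ : a₂.orthogonal P) (ha₃ : a₃.orthogonal P)
    (hb₁ : b₁.orthogonal Q) (hb₂ : b₂.orthogonal Q) (hb₃ : b₃.orthogonal Q)
    (hb₁P : ¬ b₁.orthogonal P) (hb₂P : ¬ b₂.orthogonal P) (hb₃P : ¬ b₃.orthogonal P)
    (hn₁ : ∀ x, a₂.orthogonal x → b₃.orthogonal x → n₁.orthogonal x)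
    (hn₁' : ∀ x, a₃.orthogonal x → b₂.orthogonal x → n₁.orthogonal x)
    (hn₂ : ∀ x, a₁.orthogonal x → b₃.orthogonal x → n₂.orthogonal x)
    (hn₂' : ∀ x, a₃.orthogonal x → b₁.orthogonal x → n₂.orthogonal x)
    (hn₃ : ∀ x, a₁.orthogonal x → b₂.orthogonal x → n₃.orthogonal x)
    (hn₃' : ∀ x, a₂.orthogonal x → b₁.orthogonal x → n₃.orthogonal x) :
    ∃ p, n₁.orthogonal p ∧ n₂.orthogonal p ∧ n₃.orthogonal p := by
  have hab : ∀ {a b : ℙ F (Fin 3 → F)}, a.orthogonal P → ¬ b.orthogonal P → a ≠ b :=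
    fun ha hb h => hb (h ▸ ha)
  have h₂₃ := hab ha₂ hb₃P
  have h₃₂ := hab ha₃ hb₂P
  have h₁₃ := hab ha₁ hb₃P
  have h₃₁ := hab ha₃ hb₁P
  have h₁₂ := hab ha₁ hb₂P
  have h₂₁ := hab ha₂ hb₁P
  have meet : ∀ {a b n : ℙ F (Fin 3 → F)}, a ≠ b →
      (∀ x, a.orthogonal x → b.orthogonal x → n.orthogonal x) → n.orthogonal (cross a b) :=
    fun hab hn => hn _ (orthogonal_cross_left hab) (orthogonal_cross_right hab)
  have hx₁ := cross_ne_cross_of_orthogonal ha₂ ha₃ ha₂₃ hb₃P h₂₃ h₃₂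
  have hx₂ := cross_ne_cross_of_orthogonal ha₁ ha₃ ha₁₃ hb₃P h₁₃ h₃₁
  have hx₃ := cross_ne_cross_of_orthogonal ha₁ ha₂ ha₁₂ hb₂P h₁₂ h₂₁
  rw [eq_cross_of_orthogonal hx₁ (meet h₂₃ hn₁) (meet h₃₂ hn₁'),
    eq_cross_of_orthogonal hx₂ (meet h₁₃ hn₂) (meet h₃₁ hn₂'),
    eq_cross_of_orthogonal hx₃ (meet h₁₂ hn₃) (meet h₂₁ hn₃')]
  have hl := eq_cross_of_orthogonal ha₁₂ (orthogonal_comm.mp ha₁) (orthogonal_comm.mp ha₂) ▸ ha₃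
  have hk := eq_cross_of_orthogonal hb₁₂ (orthogonal_comm.mp hb₁) (orthogonal_comm.mp hb₂) ▸ hb₃
  induction a₁ with | h l₁ hl₁ =>
  induction a₂ with | h l₂ hl₂ =>
  induction a₃ with | h l₃ hl₃ =>
  induction b₁ with | h k₁ hk₁ =>
  induction b₂ with | h k₂ hk₂ =>
  induction b₃ with | h k₃ hk₃ =>
  rw [cross_mk_of_ne _ _ ha₁₂, orthogonal_mk] at hl
  rw [cross_mk_of_ne _ _ hb₁₂, orthogonal_mk] at hk
  rw [ne_eq, mk_eq_mk_iff_crossProduct_eq_zero] at ha₁₂ hb₁₂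
  obtain ⟨s, t, rfl⟩ := exists_eq_smul_add_smul_of_dot_cross_eq_zero ha₁₂ hl
  obtain ⟨u, v, rfl⟩ := exists_eq_smul_add_smul_of_dot_cross_eq_zero hb₁₂ hk
  rw [cross_mk_of_ne _ _ h₂₃, cross_mk_of_ne _ _ h₃₂] at hx₁ ⊢
  rw [cross_mk_of_ne _ _ h₁₃, cross_mk_of_ne _ _ h₃₁] at hx₂ ⊢
  rw [cross_mk_of_ne _ _ h₁₂, cross_mk_of_ne _ _ h₂₁] at hx₃ ⊢
  rw [cross_mk_of_ne _ _ hx₁, cross_mk_of_ne _ _ hx₂, cross_mk_of_ne _ _ hx₃]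
  exact exists_orthogonal_of_dot_cross_eq_zero _ _ _ (pappus_dot_cross s t u v l₁ l₂ k₁ k₂)

end Projectivization

end Field

open Projectivization

theorem IsProjLine.exists_eq_setOf_orthogonal {L : Set ProjPlane} (h : IsProjLine L) :
    ∃ ℓ : ProjPlane, L = {p | ℓ.orthogonal p} := by
  obtain ⟨f, hf, rfl⟩ := h
  set l : Fin 3 → ℂ := fun i => f fun j => if i = j then 1 else 0
  have hfl : ∀ x, f x = l ⬝ᵥ x := fun x => by
    simp only [LinearMap.pi_apply_eq_sum_univ f x, dotProduct, smul_eq_mul, l, mul_comm]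
  have hl : l ≠ 0 := fun h0 => hf (LinearMap.ext fun x => by simp [hfl, h0])
  refine ⟨mk ℂ l hl, Set.ext fun p => ?_⟩
  change f p.rep = 0 ↔ (mk ℂ l hl).orthogonal p
  rw [hfl, ← orthogonal_mk hl p.rep_nonzero, p.mk_rep]

theorem IsProjLine.existsUnique_mem_inter {L K : Set ProjPlane} (hL : IsProjLine L)
    (hK : IsProjLine K) (hLK : L ≠ K) : ∃! p, p ∈ L ∧ p ∈ K := by
  obtain ⟨ℓ, rfl⟩ := hL.exists_eq_setOf_orthogonal
  obtain ⟨κ, rfl⟩ := hK.exists_eq_setOf_orthogonal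
  have hℓκ : ℓ ≠ κ := fun h => hLK (h ▸ rfl)
  exact ⟨cross ℓ κ, ⟨orthogonal_cross_left hℓκ, orthogonal_cross_right hℓκ⟩,
    fun p hp => eq_cross_of_orthogonal hℓκ (orthogonal_comm.mp hp.1) (orthogonal_comm.mp hp.2)⟩

theorem IsProjLine.pappus {L₁ L₂ L₃ K₁ K₂ K₃ N₁ N₂ N₃ : Set ProjPlane} {P Q : ProjPlane}
    (hL₁ : IsProjLine L₁) (hL₂ : IsProjLine L₂) (hL₃ : IsProjLine L₃)
    (hK₁ : IsProjLine K₁) (hK₂ : IsProjLine K₂) (hK₃ : IsProjLine K₃)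
    (hN₁ : IsProjLine N₁) (hN₂ : IsProjLine N₂) (hN₃ : IsProjLine N₃)
    (hL₁₂ : L₁ ≠ L₂) (hL₁₃ : L₁ ≠ L₃) (hL₂₃ : L₂ ≠ L₃) (hK₁₂ : K₁ ≠ K₂)
    (hPL₁ : P ∈ L₁) (hPL₂ : P ∈ L₂) (hPL₃ : P ∈ L₃) (hQK₁ : Q ∈ K₁) (hQK₂ : Q ∈ K₂)
    (hQK₃ : Q ∈ K₃) (hPK₁ : P ∉ K₁) (hPK₂ : P ∉ K₂) (hPK₃ : P ∉ K₃)
    (h₂₃ : L₂ ∩ K₃ ⊆ N₁) (h₃₂ : L₃ ∩ K₂ ⊆ N₁) (h₁₃ : L₁ ∩ K₃ ⊆ N₂) (h₃₁ : L₃ ∩ K₁ ⊆ N₂)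
    (h₁₂ : L₁ ∩ K₂ ⊆ N₃) (h₂₁ : L₂ ∩ K₁ ⊆ N₃) :
    ∃ p, p ∈ N₁ ∧ p ∈ N₂ ∧ p ∈ N₃ := by
  obtain ⟨a₁, rfl⟩ := hL₁.exists_eq_setOf_orthogonal
  obtain ⟨a₂, rfl⟩ := hL₂.exists_eq_setOf_orthogonal
  obtain ⟨a₃, rfl⟩ := hL₃.exists_eq_setOf_orthogonal
  obtain ⟨b₁, rfl⟩ := hK₁.exists_eq_setOf_orthogonal
  obtain ⟨b₂, rfl⟩ := hK₂.exists_eq_setOf_orthogonal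
  obtain ⟨b₃, rfl⟩ := hK₃.exists_eq_setOf_orthogonal
  obtain ⟨n₁, rfl⟩ := hN₁.exists_eq_setOf_orthogonal
  obtain ⟨n₂, rfl⟩ := hN₂.exists_eq_setOf_orthogonal
  obtain ⟨n₃, rfl⟩ := hN₃.exists_eq_setOf_orthogonal
  have hne : ∀ {a b : ProjPlane}, {p | a.orthogonal p} ≠ {p | b.orthogonal p} → a ≠ b :=
    fun h hab => h (hab ▸ rfl)
  exact Projectivization.pappus (hne hL₁₂) (hne hL₁₃) (hne hL₂₃) (hne hK₁₂)
    hPL₁ hPL₂ hPL₃ hQK₁ hQK₂ hQK₃ hPK₁ hPK₂ hPK₃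
    (fun x h h' => h₂₃ ⟨h, h'⟩) (fun x h h' => h₃₂ ⟨h, h'⟩) (fun x h h' => h₁₃ ⟨h, h'⟩)
    (fun x h h' => h₃₁ ⟨h, h'⟩) (fun x h h' => h₁₂ ⟨h, h'⟩) (fun x h h' => h₂₁ ⟨h, h'⟩)

theorem Finset.exists_mem_ne_ne_ne_of_card_eq_four {α : Type*} [DecidableEq α] {S : Finset α}
    (hS : S.card = 4) (a b c : α) : ∃ d ∈ S, d ≠ a ∧ d ≠ b ∧ d ≠ c := by
  obtain ⟨d, hd, hd'⟩ := Finset.exists_mem_notMem_of_card_lt_card (s := {a, b, c}) (t := S)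
    (by have := Finset.card_le_three (a := a) (b := b) (c := c); omega)
  simp only [Finset.mem_insert, Finset.mem_singleton, not_or] at hd'
  exact ⟨d, hd, hd'⟩

theorem Finset.eq_or_eq_or_eq_or_eq_of_card_eq_four {α : Type*} [DecidableEq α] {S : Finset α}
    (hS : S.card = 4) {a b c d x : α} (ha : a ∈ S) (hb : b ∈ S) (hc : c ∈ S) (hd : d ∈ S)
    (hab : a ≠ b) (hac : a ≠ c) (had : a ≠ d) (hbc : b ≠ c) (hbd : b ≠ d) (hcd : c ≠ d)
    (hx : x ∈ S) : x = a ∨ x = b ∨ x = c ∨ x = d := by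
  have hsub : ({a, b, c, d} : Finset α) ⊆ S := by simp [Finset.insert_subset_iff, *]
  have hcard : ({a, b, c, d} : Finset α).card = 4 := by simp [*]
  rw [← Finset.eq_of_subset_of_card_le hsub (by omega)] at hx
  simpa using hx

namespace LatinSquare

/-! `N` is a Latin square of order 4 normalised so that its last row and last column agree;
`N x 3` then serves as the name of the symbol `x`. -/

variable {γ : Type*} {N : Fin 4 → Fin 4 → γ}

theorem not_exchange (hrow : ∀ x, Injective (N x)) (hcol : ∀ y, Injective (N · y))
    (hdiag : ∀ x, N 3 x = N x 3) (hsurj : Surjective (N · 3)) {a b t : Fin 4}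
    (hab : a ≠ b) (hat : a ≠ t) (hbt : b ≠ t) (ha : a ≠ 3) (hb : b ≠ 3) (ht : t ≠ 3)
    (h₁ : N a b = N t 3) (h₂ : N b a = N 3 3) : False := by
  obtain ⟨d, hd⟩ := hsurj (N b t)
  obtain rfl : a = d := by
    rcases (show d = a ∨ d = b ∨ d = t ∨ d = 3 by omega) with h | h | h | h <;> subst d
    · rfl
    · exact absurd (hrow b hd.symm) ht
    · exact absurd (hcol t ((hdiag t).trans hd).symm) hb
    · exact absurd (hrow b (h₂.trans hd).symm) hat.symm
  obtain ⟨e, he⟩ := hsurj (N b b)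
  rcases (show e = a ∨ e = b ∨ e = t ∨ e = 3 by omega) with h | h | h | h <;> subst e
  · exact hbt (hrow b (he.symm.trans hd))
  · exact hb (hrow b he.symm)
  · exact hab (hcol b (h₁.trans he))
  · exact hab (hrow b (h₂.trans he))

theorem apply_comm (hrow : ∀ x, Injective (N x)) (hcol : ∀ y, Injective (N · y))
    (hdiag : ∀ x, N 3 x = N x 3) (hsurj : Surjective (N · 3)) (x y : Fin 4) :
    N x y = N y x := by
  rcases eq_or_ne x y with rfl | hxy
  · rfl
  rcases eq_or_ne x 3 with rfl | hx
  · exact hdiag y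
  rcases eq_or_ne y 3 with rfl | hy
  · exact (hdiag x).symm
  obtain ⟨t, hxt, hyt, ht⟩ : ∃ t, x ≠ t ∧ y ≠ t ∧ t ≠ 3 := by revert x y; decide
  obtain ⟨d, hd⟩ := hsurj (N x y)
  obtain ⟨e, he⟩ := hsurj (N y x)
  have hd' : d = t ∨ d = 3 := by
    rcases (show d = x ∨ d = y ∨ d = t ∨ d = 3 by omega) with h | h | h | h <;> subst d
    · exact absurd (hrow x hd.symm) hy
    · exact absurd (hcol y ((hdiag y).trans hd).symm) hx
    · exact .inl rfl
    · exact .inr rfl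
  have he' : e = t ∨ e = 3 := by
    rcases (show e = x ∨ e = y ∨ e = t ∨ e = 3 by omega) with h | h | h | h <;> subst e
    · exact absurd (hcol x ((hdiag x).trans he).symm) hy
    · exact absurd (hrow y he.symm) hx
    · exact .inl rfl
    · exact .inr rfl
  rcases hd' with h | h <;> rcases he' with h' | h' <;> subst d e
  · exact hd.symm.trans he
  · exact (not_exchange hrow hcol hdiag hsurj hxy hxt hyt hx hy ht hd.symm he.symm).elim
  · exact (not_exchange (N := flip N) hcol hrow (fun x => (hdiag x).symm)
      (fun z => (hsurj z).imp fun x h => (hdiag x).trans h) hxy hxt hyt hx hy ht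
      (he.symm.trans (hdiag t).symm) hd.symm).elim
  · exact hd.symm.trans he

theorem exists_apply_comm {α β γ : Type*} [Fintype β] [Fintype γ] (hβ : Fintype.card β = 4)
    (hγ : Fintype.card γ = 4) {M : α → β → γ} (hrow : ∀ a, Injective (M a))
    (hcol : ∀ b, Injective (M · b)) {r : Fin 4 → α} (hr : Injective r) (b : β) :
    ∃ c : Fin 4 → β, Injective c ∧ c 3 = b ∧ ∀ x y, M (r x) (c y) = M (r y) (c x) := by
  have hsurj : Surjective (M (r 3)) :=
    ((Fintype.bijective_iff_injective_and_card _).mpr ⟨hrow _, hβ.trans hγ.symm⟩).2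
  choose c hc using fun x => hsurj (M (r x) b)
  have hc₃ : c 3 = b := hrow _ (hc 3)
  have hcinj : Injective c := fun x y h =>
    hr (hcol b (show M (r x) b = M (r y) b by rw [← hc, ← hc, h]))
  have hsymb : Surjective fun x => M (r x) (c 3) := by
    rw [hc₃]
    exact ((Fintype.bijective_iff_injective_and_card _).mpr
      ⟨(hcol b).comp hr, by rw [Fintype.card_fin, hγ]⟩).2
  exact ⟨c, hcinj, hc₃, apply_comm (fun x => (hrow _).comp hcinj) (fun y => (hcol _).comp hr)
    (fun x => by simp only [hc, hc₃]) hsymb⟩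

end LatinSquare

namespace IsNet

variable {n q : ℕ} {A : Finset (Set ProjPlane)} {C : Fin n → Finset (Set ProjPlane)}

theorem isProjLine (hA : IsNet n q A C) {i : Fin n} {L : Set ProjPlane} (hL : L ∈ C i) :
    IsProjLine L := by
  obtain ⟨hlines, -, -, -, hsub, -, -⟩ := hA
  exact hlines L (hsub i hL)

theorem ne_of_mem (hA : IsNet n q A C) {i j : Fin n} (hij : i ≠ j) {L K : Set ProjPlane}
    (hL : L ∈ C i) (hK : K ∈ C j) : L ≠ K := by
  obtain ⟨-, -, -, hdisj, -, -, -⟩ := hA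
  rintro rfl
  exact Finset.disjoint_left.mp (hdisj i j hij) hL hK

theorem existsUnique_mem (hA : IsNet n q A C) {i j : Fin n} (hij : i ≠ j) {L K : Set ProjPlane}
    (hL : L ∈ C i) (hK : K ∈ C j) {p : ProjPlane} (hpL : p ∈ L) (hpK : p ∈ K) (m : Fin n) :
    ∃! N, N ∈ C m ∧ p ∈ N := by
  obtain ⟨-, -, -, -, -, -, hmixed⟩ := hA
  exact hmixed i j hij L hL K hK p hpL hpK m

theorem injective_of_mem_inter (hA : IsNet n q A C) {i j k : Fin n} (hij : i ≠ j) (hik : i ≠ k)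
    (L : C i) (f : C j → C k) (hf : ∀ K p, p ∈ L.1 → p ∈ K.1 → p ∈ (f K).1) : Injective f := by
  intro K K' hKK'
  obtain ⟨p, ⟨hpL, hpK⟩, -⟩ := (hA.isProjLine L.2).existsUnique_mem_inter
    (hA.isProjLine K.2) (hA.ne_of_mem hij L.2 K.2)
  obtain ⟨p', ⟨hp'L, hp'K'⟩, -⟩ := (hA.isProjLine L.2).existsUnique_mem_inter
    (hA.isProjLine K'.2) (hA.ne_of_mem hij L.2 K'.2)
  obtain rfl : p = p' := ((hA.isProjLine L.2).existsUnique_mem_inter (hA.isProjLine (f K).2)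
    (hA.ne_of_mem hik L.2 (f K).2)).unique ⟨hpL, hf K p hpL hpK⟩
    ⟨hp'L, hKK' ▸ hf K' p' hp'L hp'K'⟩
  exact Subtype.ext ((hA.existsUnique_mem hij L.2 K.2 hpL hpK j).unique ⟨K.2, hpK⟩ ⟨K'.2, hp'K'⟩)

theorem exists_latinSquare (hA : IsNet n q A C) {i j k : Fin n} (hij : i ≠ j) (hik : i ≠ k)
    (hjk : j ≠ k) :
    ∃ M : C i → C j → C k, (∀ L, Injective (M L)) ∧ (∀ K, Injective (M · K)) ∧
      ∀ L K p, p ∈ L.1 → p ∈ K.1 → p ∈ (M L K).1 := by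
  have : ∀ (L : C i) (K : C j), ∃ N : C k, ∀ p, p ∈ L.1 → p ∈ K.1 → p ∈ N.1 := by
    intro L K
    obtain ⟨p, ⟨hpL, hpK⟩, hp⟩ := (hA.isProjLine L.2).existsUnique_mem_inter
      (hA.isProjLine K.2) (hA.ne_of_mem hij L.2 K.2)
    obtain ⟨N, ⟨hN, hpN⟩, -⟩ := hA.existsUnique_mem hij L.2 K.2 hpL hpK k
    exact ⟨⟨N, hN⟩, fun p' hp'L hp'K => hp p' ⟨hp'L, hp'K⟩ ▸ hpN⟩
  choose M hM using this
  exact ⟨M, fun L => hA.injective_of_mem_inter hij hik L (M L) (hM L),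
    fun K => hA.injective_of_mem_inter hij.symm hjk K (M · K) fun L p hpK hpL => hM L K p hpL hpK,
    hM⟩

theorem notMem_of_mem_of_mem (hA : IsNet n q A C) {i j : Fin n} (hij : i ≠ j)
    {L L' K : Set ProjPlane} (hL : L ∈ C i) (hL' : L' ∈ C i) (hK : K ∈ C j) (hLL' : L ≠ L')
    {p : ProjPlane} (hpL : p ∈ L) (hpL' : p ∈ L') : p ∉ K := fun hpK =>
  hLL' ((hA.existsUnique_mem hij hL hK hpL hpK i).unique ⟨hL, hpL⟩ ⟨hL', hpL'⟩)

theorem hasConcurrentTriple_of_comm (hA : IsNet n q A C) {i j k : Fin n} (hij : i ≠ j)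
    {M : C i → C j → C k} (hrow : ∀ L, Injective (M L)) (hcol : ∀ K, Injective (M · K))
    (hM : ∀ L K p, p ∈ L.1 → p ∈ K.1 → p ∈ (M L K).1) {r : Fin 3 → C i} (hr : Injective r)
    {c : Fin 3 → C j} (hc : Injective c) (hcomm : ∀ x y, M (r x) (c y) = M (r y) (c x))
    {P Q : ProjPlane} (hP : ∀ x, P ∈ (r x).1) (hQ : ∀ x, Q ∈ (c x).1) :
    HasConcurrentTriple (C k) := by
  have hline : ∀ {m} (L : C m), IsProjLine L.1 := fun L => hA.isProjLine L.2
  have hne : ∀ {m} {L L' : C m}, L ≠ L' → L.1 ≠ L'.1 := Subtype.coe_injective.ne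
  have hPc : ∀ x, P ∉ (c x).1 := fun x =>
    hA.notMem_of_mem_of_mem hij (r 0).2 (r 1).2 (c x).2 (hne (hr.ne (by decide))) (hP 0) (hP 1)
  have hN : ∀ x y, (r x).1 ∩ (c y).1 ⊆ (M (r x) (c y)).1 := fun x y p hp => hM _ _ p hp.1 hp.2
  obtain ⟨p, hp₁, hp₂, hp₃⟩ := IsProjLine.pappus (hline (r 0)) (hline (r 1)) (hline (r 2))
    (hline (c 0)) (hline (c 1)) (hline (c 2)) (hline (M (r 1) (c 2))) (hline (M (r 0) (c 2)))
    (hline (M (r 0) (c 1))) (hne (hr.ne (by decide))) (hne (hr.ne (by decide)))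
    (hne (hr.ne (by decide))) (hne (hc.ne (by decide))) (hP 0) (hP 1) (hP 2) (hQ 0) (hQ 1) (hQ 2)
    (hPc 0) (hPc 1) (hPc 2) (hN 1 2) (hcomm 1 2 ▸ hN 2 1) (hN 0 2) (hcomm 0 2 ▸ hN 2 0)
    (hN 0 1) (hcomm 0 1 ▸ hN 1 0)
  refine ⟨_, (M (r 1) (c 2)).2, _, (M (r 0) (c 2)).2, _, (M (r 0) (c 1)).2,
    hne fun h => absurd (hr (hcol _ h)) (by decide), ?_,
    hne fun h => absurd (hc (hrow _ h)) (by decide), p, hp₁, hp₂, hp₃⟩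
  rw [hcomm 0 1]
  exact hne fun h => absurd (hc (hrow _ h)) (by decide)

theorem hasConcurrentTriple_of_ne (hA : IsNet n 4 A C) {i j k : Fin n} (hij : i ≠ j)
    (hik : i ≠ k) (hjk : j ≠ k) (hi : HasConcurrentTriple (C i))
    (hj : HasConcurrentTriple (C j)) : HasConcurrentTriple (C k) := by
  obtain ⟨L₁, hL₁, L₂, hL₂, L₃, hL₃, hL₁₂, hL₁₃, hL₂₃, P, hPL₁, hPL₂, hPL₃⟩ := hi
  obtain ⟨K₁, hK₁, K₂, hK₂, K₃, hK₃, hK₁₂, hK₁₃, hK₂₃, Q, hQK₁, hQK₂, hQK₃⟩ := hj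
  have hcard : ∀ m, (C m).card = 4 := hA.2.2.1
  obtain ⟨L₄, hL₄, hL₄₁, hL₄₂, hL₄₃⟩ :=
    Finset.exists_mem_ne_ne_ne_of_card_eq_four (hcard i) L₁ L₂ L₃
  obtain ⟨K₄, hK₄, hK₄₁, hK₄₂, hK₄₃⟩ :=
    Finset.exists_mem_ne_ne_ne_of_card_eq_four (hcard j) K₁ K₂ K₃
  obtain ⟨M, hrow, hcol, hM⟩ := hA.exists_latinSquare hij hik hjk
  set r : Fin 4 → C i := ![⟨L₁, hL₁⟩, ⟨L₂, hL₂⟩, ⟨L₃, hL₃⟩, ⟨L₄, hL₄⟩]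
  have hr : Injective r := by
    simp [Injective, Fin.forall_fin_succ, r, hL₁₂, hL₁₃, hL₂₃, hL₄₁, hL₄₂, hL₄₃, hL₁₂.symm,
      hL₁₃.symm, hL₂₃.symm, hL₄₁.symm, hL₄₂.symm, hL₄₃.symm]
  obtain ⟨c, hc, hc₃, hcomm⟩ := LatinSquare.exists_apply_comm (by simp [hcard j])
    (by simp [hcard k]) hrow hcol hr ⟨K₄, hK₄⟩
  have hQ : ∀ x : Fin 3, Q ∈ (c x.castSucc).1 := by
    intro x
    have hne : (c x.castSucc).1 ≠ K₄ := fun h =>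
      (Fin.castSucc_lt_last x).ne (hc (Subtype.ext (h.trans (congrArg Subtype.val hc₃).symm)))
    rcases Finset.eq_or_eq_or_eq_or_eq_of_card_eq_four (hcard j) hK₁ hK₂ hK₃ hK₄ hK₁₂ hK₁₃
      hK₄₁.symm hK₂₃ hK₄₂.symm hK₄₃.symm (c x.castSucc).2 with h | h | h | h
    · exact h ▸ hQK₁
    · exact h ▸ hQK₂
    · exact h ▸ hQK₃
    · exact absurd h hne
  exact hA.hasConcurrentTriple_of_comm hij hrow hcol hM (hr.comp (Fin.castSucc_injective 3))
    (hc.comp (Fin.castSucc_injective 3)) (fun x y => hcomm _ _)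
    (fun x => by fin_cases x <;> assumption) hQ

end IsNet

theorem statement6_general (A : Finset (Set ProjPlane)) (C : Fin 3 → Finset (Set ProjPlane))
    (hA : IsNet 3 4 A C)
    (i j : Fin 3) (hij : i ≠ j)
    (hi : HasConcurrentTriple (C i)) (hj : HasConcurrentTriple (C j)) :
    ∀ k : Fin 3, HasConcurrentTriple (C k) := by
  intro k
  rcases eq_or_ne i k with rfl | hik
  · exact hi
  rcases eq_or_ne j k with rfl | hjk
  · exact hj
  exact hA.hasConcurrentTriple_of_ne hij hik hjk hi hj

/-- In a (3,4)-net with only double and triple points, if two of the classes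
contain a triple of concurrent lines, then so does the third. -/
theorem statement6 (A : Finset (Set ProjPlane)) (C : Fin 3 → Finset (Set ProjPlane))
    (hA : IsNet 3 4 A C)
    (hmult : ∀ p : ProjPlane, IsMultPoint A p → mult A p = 2 ∨ mult A p = 3)
    (i j : Fin 3) (hij : i ≠ j)
    (hi : HasConcurrentTriple (C i)) (hj : HasConcurrentTriple (C j)) :
    ∀ k : Fin 3, HasConcurrentTriple (C k) :=
  statement6_general A C hA i j hij hi hj
end
end

section
/- Let A be an arrangement of 12 distinct lines in P^2(C) all of whose multiple points have multiplicity at most 5, and suppose A admits a non-constant 2-cocycle η : A → F_2. Then every line of A contains exactly 3 quadruple points of A. -/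
open scoped Classical

noncomputable section

/-!
Split the lines by the value of `η`. At a point on lines of both classes the multiplicity is even
(`η` is not constant there) and so is the number of lines with `η = 1` (the cocycle sum vanishes);
with multiplicity at most `5` it is a quadruple point with two lines of each class. So the lines of
the other class meet a line `L` in pairs, at "cross points", each of which carries one more line of
the class of `L`, and these lines are distinct. With `a` the size of the class of `L`, `b` that of
the other class and `i` the number of cross points on `L`, this gives `b = 2i` and `i < a`;
symmetrically `a` is even and `a/2 < b`, and `a + b = 12` forces `a = b = 6`, `i = 3`. Another
quadruple point on `L` would lie on three more lines of the class of `L`, which together with the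
lines through the three cross points would exceed the five available.
-/

namespace IsProjLine

variable {L K : Set ProjPlane}

theorem exists_mem_inter (hL : IsProjLine L) (hK : IsProjLine K) : ∃ p, p ∈ L ∧ p ∈ K := by
  obtain ⟨f, -, rfl⟩ := hL
  obtain ⟨g, -, rfl⟩ := hK
  have hker : LinearMap.ker (f.prod g) ≠ ⊥ :=
    LinearMap.ker_ne_bot_of_finrank_lt (by simp)
  obtain ⟨v, hv, hv0⟩ := (Submodule.ne_bot_iff _).mp hker
  obtain ⟨a, ha⟩ := Projectivization.exists_smul_eq_mk_rep ℂ v hv0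
  rw [LinearMap.mem_ker] at hv
  have hfv : f v = 0 := congrArg Prod.fst hv
  have hgv : g v = 0 := congrArg Prod.snd hv
  exact ⟨Projectivization.mk ℂ v hv0, by simp [← ha, Units.smul_def, hfv, hgv]⟩

theorem ker_eq_span_pair {f : (Fin 3 → ℂ) →ₗ[ℂ] ℂ} (hf : f ≠ 0) {p q : ProjPlane} (hpq : p ≠ q)
    (hp : f p.rep = 0) (hq : f q.rep = 0) :
    LinearMap.ker f = Submodule.span ℂ (Set.range ![p.rep, q.rep]) := by
  have hli : LinearIndependent ℂ ![p.rep, q.rep] := by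
    have h := Projectivization.independent_iff.mp
      ((Projectivization.independent_pair_iff_ne p q).mpr hpq)
    rwa [show Projectivization.rep ∘ ![p, q] = ![p.rep, q.rep] by
      ext i : 1; fin_cases i <;> rfl] at h
  have hle : Submodule.span ℂ (Set.range ![p.rep, q.rep]) ≤ LinearMap.ker f := by
    rw [Submodule.span_le]
    rintro x ⟨i, rfl⟩
    fin_cases i <;> simp [hp, hq]
  have hker : Module.finrank ℂ (LinearMap.ker f) < 3 := by
    have := Submodule.finrank_lt (K := ℂ) (fun h => hf (LinearMap.ker_eq_top.mp h))
    rwa [Module.finrank_fin_fun] at this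
  refine (Submodule.eq_of_le_of_finrank_le hle ?_).symm
  rw [finrank_span_eq_card hli, Fintype.card_fin]
  omega

theorem eq_of_mem_of_mem (hL : IsProjLine L) (hK : IsProjLine K) {p q : ProjPlane} (hpq : p ≠ q)
    (hpL : p ∈ L) (hqL : q ∈ L) (hpK : p ∈ K) (hqK : q ∈ K) : L = K := by
  obtain ⟨f, hf, rfl⟩ := hL
  obtain ⟨g, hg, rfl⟩ := hK
  have hfg : LinearMap.ker f = LinearMap.ker g := by
    rw [ker_eq_span_pair hf hpq hpL hqL, ker_eq_span_pair hg hpq hpK hqK]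
  ext x
  simp only [Set.mem_ofPred_eq, ← LinearMap.mem_ker, hfg]

end IsProjLine

def meet (L K : Set ProjPlane) : ProjPlane :=
  Classical.epsilon fun p => p ∈ L ∧ p ∈ K

theorem meet_mem {L K : Set ProjPlane} (hL : IsProjLine L) (hK : IsProjLine K) :
    meet L K ∈ L ∧ meet L K ∈ K :=
  Classical.epsilon_spec (hL.exists_mem_inter hK)

theorem meet_eq {L K : Set ProjPlane} (hL : IsProjLine L) (hK : IsProjLine K) (hLK : L ≠ K)
    {p : ProjPlane} (hpL : p ∈ L) (hpK : p ∈ K) : meet L K = p := by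
  by_contra h
  obtain ⟨hmL, hmK⟩ := meet_mem hL hK
  exact hLK (hL.eq_of_mem_of_mem hK h hmL hpL hmK hpK)

open Finset

theorem ZMod.two_ne_iff_eq_add_one {a b : ZMod 2} : a ≠ b ↔ a = b + 1 := by
  revert a b; decide

theorem ZMod.two_add_one_add_one (a : ZMod 2) : a + 1 + 1 = a := by
  revert a; decide

theorem ZMod.two_sum_eq_card_filter {α : Type*} (s : Finset α) (f : α → ZMod 2) :
    ∑ x ∈ s, f x = #(s.filter (f · = 1)) := by
  have hf : ∀ a : ZMod 2, a = if a = 1 then 1 else 0 := by decide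
  rw [← sum_boole]
  exact sum_congr rfl fun x _ => hf (f x)

theorem card_filter_eq_add_card_filter_eq_add_one {α : Type*} (s : Finset α) (f : α → ZMod 2)
    (c : ZMod 2) : #(s.filter (f · = c)) + #(s.filter (f · = c + 1)) = #s := by
  rw [← card_filter_add_card_filter_not (s := s) (fun x => f x = c)]
  simp only [← ne_eq, ZMod.two_ne_iff_eq_add_one]

theorem mem_linesThrough {A : Finset (Set ProjPlane)} {p : ProjPlane} {N : Set ProjPlane} :
    N ∈ linesThrough A p ↔ N ∈ A ∧ p ∈ N :=
  mem_filter

/-- Lines of `B` other than `L` through distinct points of `L` are distinct. -/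
theorem sum_card_filter_mem_le {B : Finset (Set ProjPlane)} (hB : ∀ N ∈ B, IsProjLine N)
    {L : Set ProjPlane} (hL : IsProjLine L) {S : Finset ProjPlane} (hS : ∀ q ∈ S, q ∈ L) :
    ∑ q ∈ S, #((B.erase L).filter (q ∈ ·)) ≤ #(B.erase L) := by
  rw [← card_biUnion]
  · exact card_le_card (biUnion_subset.mpr fun q _ => filter_subset _ _)
  · intro q hq q' hq' hqq'
    refine disjoint_left.mpr fun N hN hN' => ?_
    obtain ⟨hNL, hNB⟩ := mem_erase.mp (mem_filter.mp hN).1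
    exact hNL ((hB N hNB).eq_of_mem_of_mem hL hqq' (mem_filter.mp hN).2 (mem_filter.mp hN').2
      (hS q hq) (hS q' hq'))

section Cocycle

variable {A : Finset (Set ProjPlane)} {η : Set ProjPlane → ZMod 2}

theorem mult_eq_four_and_card_filter_eq_two (hmult : ∀ p, IsMultPoint A p → mult A p ≤ 5)
    (hη : IsCocycle 2 A η) {p : ProjPlane} {L K : Set ProjPlane} (hL : L ∈ linesThrough A p)
    (hK : K ∈ linesThrough A p) (hLK : η L ≠ η K) :
    mult A p = 4 ∧ ∀ c, #((linesThrough A p).filter (η · = c)) = 2 := by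
  set T := linesThrough A p
  have hmp : IsMultPoint A p := one_lt_card.mpr ⟨L, hL, K, hK, fun h => hLK (congrArg η h)⟩
  obtain ⟨hsum, hconst⟩ := hη p hmp
  have hT : 2 ∣ #T := by_contra fun h => hLK (hconst h L hL K hK)
  have hT₁ : 2 ∣ #(T.filter (η · = 1)) := by
    have := hsum hT
    rwa [ZMod.two_sum_eq_card_filter, ZMod.natCast_eq_zero_iff] at this
  have hpos : ∀ c, 1 ≤ #(T.filter (η · = c)) := by
    intro c
    by_cases hc : η L = c
    · exact card_pos.mpr ⟨L, mem_filter.mpr ⟨hL, hc⟩⟩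
    · have hKc : η K = c := by
        rw [ZMod.two_ne_iff_eq_add_one.mp (Ne.symm hLK), ZMod.two_ne_iff_eq_add_one.mp (Ne.symm hc)]
      exact card_pos.mpr ⟨K, mem_filter.mpr ⟨hK, hKc⟩⟩
  have hsplit := card_filter_eq_add_card_filter_eq_add_one T η 0
  rw [zero_add] at hsplit
  have hle : #T ≤ 5 := hmult p hmp
  have h₀ := hpos 0
  have h₁ := hpos 1
  have h₀₂ : #(T.filter (η · = 0)) = 2 := by omega
  have h₁₂ : #(T.filter (η · = 1)) = 2 := by omega
  refine ⟨by change #T = 4; omega, fun c => ?_⟩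
  obtain rfl | rfl : c = 0 ∨ c = 1 := by revert c; decide
  exacts [h₀₂, h₁₂]

def crossPoints (A : Finset (Set ProjPlane)) (η : Set ProjPlane → ZMod 2) (L : Set ProjPlane) :
    Finset ProjPlane :=
  (A.filter (η · = η L + 1)).image (meet L)

theorem mem_crossPoints (hlines : ∀ N ∈ A, IsProjLine N) {L : Set ProjPlane} (hL : L ∈ A)
    {p : ProjPlane} : p ∈ crossPoints A η L ↔ p ∈ L ∧ ∃ K ∈ A, η K = η L + 1 ∧ p ∈ K := by
  constructor
  · intro h
    obtain ⟨K, hK, rfl⟩ := mem_image.mp h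
    obtain ⟨hKA, hKη⟩ := mem_filter.mp hK
    obtain ⟨hmL, hmK⟩ := meet_mem (hlines L hL) (hlines K hKA)
    exact ⟨hmL, K, hKA, hKη, hmK⟩
  · rintro ⟨hpL, K, hKA, hKη, hpK⟩
    have hLK : L ≠ K := ne_of_apply_ne η (ZMod.two_ne_iff_eq_add_one.mpr hKη).symm
    exact mem_image.mpr ⟨K, mem_filter.mpr ⟨hKA, hKη⟩,
      meet_eq (hlines L hL) (hlines K hKA) hLK hpL hpK⟩

theorem mult_eq_four_and_card_filter_eq_two_of_mem_crossPoints
    (hlines : ∀ N ∈ A, IsProjLine N) (hmult : ∀ p, IsMultPoint A p → mult A p ≤ 5)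
    (hη : IsCocycle 2 A η) {L : Set ProjPlane} (hL : L ∈ A) {q : ProjPlane}
    (hq : q ∈ crossPoints A η L) :
    q ∈ L ∧ mult A q = 4 ∧ ∀ c, #((linesThrough A q).filter (η · = c)) = 2 := by
  obtain ⟨hqL, K, hKA, hKη, hqK⟩ := (mem_crossPoints hlines hL).mp hq
  refine ⟨hqL, mult_eq_four_and_card_filter_eq_two hmult hη (mem_linesThrough.mpr ⟨hL, hqL⟩)
    (mem_linesThrough.mpr ⟨hKA, hqK⟩) (ZMod.two_ne_iff_eq_add_one.mpr hKη).symm⟩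

/-- Each line of the other class meets `L` at a cross point, which lies on exactly two of them. -/
theorem card_filter_eq_add_one_eq_two_mul_card_crossPoints
    (hlines : ∀ N ∈ A, IsProjLine N) (hmult : ∀ p, IsMultPoint A p → mult A p ≤ 5)
    (hη : IsCocycle 2 A η) {L : Set ProjPlane} (hL : L ∈ A) :
    #(A.filter (η · = η L + 1)) = 2 * #(crossPoints A η L) := by
  rw [card_eq_sum_card_fiberwise fun K hK => mem_image_of_mem (meet L) hK, mul_comm,
    ← smul_eq_mul, ← sum_const]
  refine sum_congr rfl fun q hq => ?_
  obtain ⟨hqL, -, hq₂⟩ :=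
    mult_eq_four_and_card_filter_eq_two_of_mem_crossPoints hlines hmult hη hL hq
  refine Eq.trans (congrArg card ?_) (hq₂ (η L + 1))
  ext K
  simp only [mem_filter, mem_linesThrough]
  constructor
  · rintro ⟨⟨hKA, hKη⟩, rfl⟩
    exact ⟨⟨hKA, (meet_mem (hlines L hL) (hlines K hKA)).2⟩, hKη⟩
  · rintro ⟨⟨hKA, hqK⟩, hKη⟩
    have hLK : L ≠ K := ne_of_apply_ne η (ZMod.two_ne_iff_eq_add_one.mpr hKη).symm
    exact ⟨⟨hKA, hKη⟩, meet_eq (hlines L hL) (hlines K hKA) hLK hqL hqK⟩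

theorem filter_erase_filter_mem (L : Set ProjPlane) (q : ProjPlane) (c : ZMod 2) :
    ((A.filter (η · = c)).erase L).filter (q ∈ ·) =
      ((linesThrough A q).filter (η · = c)).erase L := by
  ext N
  simp only [mem_filter, mem_erase, mem_linesThrough]
  tauto

theorem card_erase_filter_mem_of_mem_crossPoints
    (hlines : ∀ N ∈ A, IsProjLine N) (hmult : ∀ p, IsMultPoint A p → mult A p ≤ 5)
    (hη : IsCocycle 2 A η) {L : Set ProjPlane} (hL : L ∈ A) {q : ProjPlane}
    (hq : q ∈ crossPoints A η L) :
    #(((A.filter (η · = η L)).erase L).filter (q ∈ ·)) = 1 := by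
  obtain ⟨hqL, -, hq₂⟩ :=
    mult_eq_four_and_card_filter_eq_two_of_mem_crossPoints hlines hmult hη hL hq
  have hLq : L ∈ (linesThrough A q).filter (η · = η L) :=
    mem_filter.mpr ⟨mem_linesThrough.mpr ⟨hL, hqL⟩, rfl⟩
  rw [filter_erase_filter_mem, card_erase_of_mem hLq, hq₂]

theorem card_crossPoints_lt
    (hlines : ∀ N ∈ A, IsProjLine N) (hmult : ∀ p, IsMultPoint A p → mult A p ≤ 5)
    (hη : IsCocycle 2 A η) {L : Set ProjPlane} (hL : L ∈ A) :
    #(crossPoints A η L) < #(A.filter (η · = η L)) := by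
  have hLB : L ∈ A.filter (η · = η L) := mem_filter.mpr ⟨hL, rfl⟩
  have hle := sum_card_filter_mem_le (B := A.filter (η · = η L)) (S := crossPoints A η L)
    (fun N hN => hlines N (mem_filter.mp hN).1) (hlines L hL)
    fun q hq => ((mem_crossPoints hlines hL).mp hq).1
  rw [sum_congr rfl fun q hq =>
      card_erase_filter_mem_of_mem_crossPoints hlines hmult hη hL hq,
    card_erase_of_mem hLB, sum_const, smul_eq_mul, mul_one] at hle
  have := card_pos.mpr ⟨L, hLB⟩
  omega

theorem mem_crossPoints_of_mult_eq_four
    (hlines : ∀ N ∈ A, IsProjLine N) (hmult : ∀ p, IsMultPoint A p → mult A p ≤ 5)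
    (hη : IsCocycle 2 A η) {L : Set ProjPlane} (hL : L ∈ A)
    (hB : #(A.filter (η · = η L)) ≤ #(crossPoints A η L) + 3) {p : ProjPlane} (hpL : p ∈ L)
    (hp4 : mult A p = 4) : p ∈ crossPoints A η L := by
  by_contra hpI
  have hall : (linesThrough A p).filter (η · = η L) = linesThrough A p := by
    refine filter_true_of_mem fun N hN => by_contra fun h => hpI ?_
    obtain ⟨hNA, hpN⟩ := mem_linesThrough.mp hN
    exact (mem_crossPoints hlines hL).mpr ⟨hpL, N, hNA, ZMod.two_ne_iff_eq_add_one.mp h, hpN⟩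
  have hp₃ : #(((A.filter (η · = η L)).erase L).filter (p ∈ ·)) = 3 := by
    rw [filter_erase_filter_mem, hall, card_erase_of_mem (mem_linesThrough.mpr ⟨hL, hpL⟩)]
    exact congrArg (· - 1) hp4
  have hle := sum_card_filter_mem_le (B := A.filter (η · = η L))
    (S := insert p (crossPoints A η L)) (fun N hN => hlines N (mem_filter.mp hN).1)
    (hlines L hL) fun q hq => by
      rcases mem_insert.mp hq with rfl | hq
      exacts [hpL, ((mem_crossPoints hlines hL).mp hq).1]
  have hLB : L ∈ A.filter (η · = η L) := mem_filter.mpr ⟨hL, rfl⟩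
  rw [sum_insert hpI, hp₃, sum_congr rfl fun q hq =>
      card_erase_filter_mem_of_mem_crossPoints hlines hmult hη hL hq,
    card_erase_of_mem hLB, sum_const, smul_eq_mul, mul_one] at hle
  omega

theorem setOf_mult_eq_four_eq_crossPoints
    (hlines : ∀ N ∈ A, IsProjLine N) (hmult : ∀ p, IsMultPoint A p → mult A p ≤ 5)
    (hη : IsCocycle 2 A η) {L : Set ProjPlane} (hL : L ∈ A)
    (hB : #(A.filter (η · = η L)) ≤ #(crossPoints A η L) + 3) :
    {p | p ∈ L ∧ mult A p = 4} = (crossPoints A η L : Set ProjPlane) := by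
  ext p
  refine ⟨fun ⟨hpL, hp4⟩ => mem_crossPoints_of_mult_eq_four hlines hmult hη hL hB hpL hp4,
    fun hp => ?_⟩
  obtain ⟨hpL, hp4, -⟩ :=
    mult_eq_four_and_card_filter_eq_two_of_mem_crossPoints hlines hmult hη hL hp
  exact ⟨hpL, hp4⟩

end Cocycle

/-- if an arrangement of 12 lines with points of multiplicity at most 5
admits a non-constant 2-cocycle, then every line contains exactly 3 quadruple points. -/
theorem statement13 (A : Finset (Set ProjPlane))
    (hlines : ∀ L ∈ A, IsProjLine L) (hcard : A.card = 12)
    (hmult : ∀ p : ProjPlane, IsMultPoint A p → mult A p ≤ 5)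
    (η : Set ProjPlane → ZMod 2) (hη : IsCocycle 2 A η) (hnc : NonConstant A η) :
    ∀ L ∈ A, {p : ProjPlane | p ∈ L ∧ mult A p = 4}.ncard = 3 := by
  intro L hL
  obtain ⟨K, hK, hKL⟩ : ∃ K ∈ A, η K = η L + 1 := by
    obtain ⟨L', hL', K', hK', hne⟩ := hnc
    by_cases h : η L' = η L
    · exact ⟨K', hK', ZMod.two_ne_iff_eq_add_one.mp (h ▸ hne.symm)⟩
    · exact ⟨L', hL', ZMod.two_ne_iff_eq_add_one.mp h⟩
  have hKK : η K + 1 = η L := by rw [hKL, ZMod.two_add_one_add_one]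
  have hsplit := card_filter_eq_add_card_filter_eq_add_one A η (η L)
  have hL₁ := card_filter_eq_add_one_eq_two_mul_card_crossPoints hlines hmult hη hL
  have hK₁ := card_filter_eq_add_one_eq_two_mul_card_crossPoints hlines hmult hη hK
  have hL₂ := card_crossPoints_lt hlines hmult hη hL
  have hK₂ := card_crossPoints_lt hlines hmult hη hK
  rw [hKK] at hK₁
  rw [hKL] at hK₂
  have hI : #(crossPoints A η L) = 3 := by omega
  rw [setOf_mult_eq_four_eq_crossPoints hlines hmult hη hL (by omega), Set.ncard_coe_finset, hI]
end
end
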